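/- arXiv:1409.0072 — 2 statements merged into one kernel-verified Lean document; each statement's English description precedes it below -/
import Mathlib

section
/- With W(s) = A11 + A12 (sI − A22)⁻¹ A21 and R(s) = diag(W(s)) (the diagonal matrix of the diagonal entries of W), define Q(s) = (sI − R(s))⁻¹ (W(s) − R(s)). Then lim_{s→∞} s·Q(s) = A11 − diag(A11), where the limit is taken entrywise along real s → ∞. -/
/-!
As `s → ∞` the resolvent `(sI - A22)⁻¹ = s⁻¹ (I - s⁻¹ A22)⁻¹` tends to `0`, so `W(s) → A11`.
Since `sI - R(s)` is diagonal with entries `s - W(s)ₖₖ`, we have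
`s Q(s) = diag (s / (s - W(s)ₖₖ)) (W(s) - diag W(s))`, and the first factor tends to `I`.
-/

open Matrix Filter Topology

namespace Matrix

variable {n K : Type*} [Fintype n] [DecidableEq n] [Field K]

theorem inv_smul₀ (k : K) (A : Matrix n n K) : (k • A)⁻¹ = k⁻¹ • A⁻¹ := by
  rcases eq_or_ne k 0 with rfl | hk
  · simp
  by_cases hA : IsUnit A.det
  · exact inv_smul' A (Units.mk0 k hk) hA
  · have hkA : ¬IsUnit (k • A).det := by
      simpa [det_smul, isUnit_iff_ne_zero, hk] using hA
    rw [nonsing_inv_apply_not_isUnit _ hA, nonsing_inv_apply_not_isUnit _ hkA, smul_zero]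

theorem inv_diagonal_of_ne_zero {d : n → K} (hd : ∀ k, d k ≠ 0) :
    (diagonal d)⁻¹ = diagonal d⁻¹ :=
  inv_eq_left_inv <| by
    rw [diagonal_mul_diagonal, ← diagonal_one]
    exact congrArg diagonal (funext fun k => inv_mul_cancel₀ (hd k))

end Matrix

theorem tendsto_div_self_sub_atTop {f : ℝ → ℝ} {c : ℝ} (hf : Tendsto f atTop (𝓝 c)) :
    Tendsto (fun s => s / (s - f s)) atTop (𝓝 1) := by
  have hden : Tendsto (fun s => s - f s) atTop atTop := tendsto_id.atTop_add hf.neg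
  have hlim : Tendsto (fun s => 1 + f s / (s - f s)) atTop (𝓝 (1 + 0)) :=
    tendsto_const_nhds.add (hf.div_atTop hden)
  rw [add_zero] at hlim
  refine hlim.congr' ?_
  filter_upwards [hden.eventually_ne_atTop 0] with s hs
  field_simp
  ring

theorem tendsto_inv_smul_one_sub_atTop {n : Type*} [Fintype n] [DecidableEq n]
    (A : Matrix n n ℝ) :
    Tendsto (fun s : ℝ => (s • (1 : Matrix n n ℝ) - A)⁻¹) atTop (𝓝 0) := by
  have hcont : ContinuousAt (fun t : ℝ => (1 - t • A)⁻¹) 0 := by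
    refine (continuousAt_matrix_inv _ ?_).comp (by fun_prop)
    rw [Ring.inverse_eq_inv']
    exact continuousAt_inv₀ (by simp)
  have hlim : Tendsto (fun s : ℝ => s⁻¹ • (1 - s⁻¹ • A)⁻¹) atTop (𝓝 0) := by
    simpa using tendsto_inv_atTop_zero.smul (hcont.tendsto.comp tendsto_inv_atTop_zero)
  refine hlim.congr' ?_
  filter_upwards [eventually_ne_atTop 0] with s hs
  rw [← inv_smul₀, smul_sub, smul_smul, mul_inv_cancel₀ hs, one_smul]

theorem tendsto_add_mul_inv_smul_one_sub_mul_atTop {n m : Type*} [Fintype m] [DecidableEq m]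
    (A11 : Matrix n n ℝ) (A12 : Matrix n m ℝ) (A21 : Matrix m n ℝ) (A22 : Matrix m m ℝ) :
    Tendsto (fun s : ℝ => A11 + A12 * (s • (1 : Matrix m m ℝ) - A22)⁻¹ * A21) atTop
      (𝓝 A11) := by
  have hcont : Continuous fun X : Matrix m m ℝ => A11 + A12 * X * A21 := by fun_prop
  simpa [Function.comp_def] using
    (hcont.tendsto 0).comp (tendsto_inv_smul_one_sub_atTop A22)

theorem tendsto_smul_inv_smul_one_sub_diagonal_mul_atTop {n : Type*} [Fintype n] [DecidableEq n]
    {W : ℝ → Matrix n n ℝ} {L : Matrix n n ℝ} (hW : Tendsto W atTop (𝓝 L)) :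
    Tendsto (fun s : ℝ => s • ((s • (1 : Matrix n n ℝ) - diagonal (diag (W s)))⁻¹ *
      (W s - diagonal (diag (W s))))) atTop (𝓝 (L - diagonal (diag L))) := by
  have hdiag (k : n) : Tendsto (fun s => W s k k) atTop (𝓝 (L k k)) :=
    ((continuous_id.matrix_elem k k).tendsto L).comp hW
  have hoff : Tendsto (fun s => W s - diagonal (diag (W s))) atTop
      (𝓝 (L - diagonal (diag L))) :=
    ((continuous_id.sub continuous_id.matrix_diag.matrix_diagonal).tendsto L).comp hW
  have hscale : Tendsto (fun s : ℝ => diagonal fun k => s / (s - W s k k)) atTop (𝓝 1) := by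
    rw [← diagonal_one]
    exact (continuous_id.matrix_diagonal.tendsto _).comp
      (tendsto_pi_nhds.2 fun k => tendsto_div_self_sub_atTop (hdiag k))
  have hne : ∀ᶠ s in atTop, ∀ k, s - W s k k ≠ 0 :=
    eventually_all.2 fun k => (tendsto_id.atTop_add (hdiag k).neg).eventually_ne_atTop 0
  have hlim := hscale.mul hoff
  rw [one_mul] at hlim
  refine hlim.congr' ?_
  filter_upwards [hne] with s hs
  rw [smul_one_eq_diagonal, diagonal_sub,
    inv_diagonal_of_ne_zero (d := fun k => s - diag (W s) k) hs, ← smul_mul_assoc,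
    ← diagonal_smul]
  rfl

/-- with W(s) = A11 + A12(sI − A22)⁻¹A21, R(s) = diag W(s) and
Q(s) = (sI − R(s))⁻¹ (W(s) − R(s)), one has lim_{s→∞} s·Q(s) = A11 − diag A11 entrywise. -/
theorem stmt1 (p q : ℕ)
    (A11 : Matrix (Fin p) (Fin p) ℝ) (A12 : Matrix (Fin p) (Fin q) ℝ)
    (A21 : Matrix (Fin q) (Fin p) ℝ) (A22 : Matrix (Fin q) (Fin q) ℝ)
    (W R Q : ℝ → Matrix (Fin p) (Fin p) ℝ)
    (hW : ∀ s : ℝ, W s = A11 + A12 * (s • (1 : Matrix (Fin q) (Fin q) ℝ) - A22)⁻¹ * A21)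
    (hR : ∀ s : ℝ, R s = Matrix.diagonal (fun i => W s i i))
    (hQ : ∀ s : ℝ, Q s = (s • (1 : Matrix (Fin p) (Fin p) ℝ) - R s)⁻¹ * (W s - R s)) :
    ∀ i j : Fin p,
      Tendsto (fun s : ℝ => s * Q s i j) atTop
        (nhds ((A11 - Matrix.diagonal (fun i => A11 i i)) i j)) := by
  intro i j
  have hWlim : Tendsto W atTop (𝓝 A11) := by
    simpa only [← hW] using tendsto_add_mul_inv_smul_one_sub_mul_atTop A11 A12 A21 A22
  have hsQ : (fun s : ℝ => s • Q s) = fun s => s • ((s • (1 : Matrix (Fin p) (Fin p) ℝ) -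
      diagonal (diag (W s)))⁻¹ * (W s - diagonal (diag (W s)))) :=
    funext fun s => by rw [hQ s, hR s]; rfl
  have hQlim := tendsto_smul_inv_smul_one_sub_diagonal_mul_atTop hWlim
  rw [← hsQ] at hQlim
  exact ((continuous_id.matrix_elem i j).tendsto _).comp hQlim
end

section
/- Let Q, P, R be as in the DSF construction from a state-space system (A, B, C=[I_p 0]): W(s) = A11 + A12(sI−A22)⁻¹A21, V(s) = B1 + A12(sI−A22)⁻¹B2, R(s) = diag W(s), Q = (sI−R)⁻¹(W−R), P = (sI−R)⁻¹V. Then (I − Q(s))⁻¹P(s) = C(sI − A)⁻¹B = G(s), i.e., the transfer function is recovered from the dynamical structure functions, as an identity of rational matrix functions (valid for all s where the inverses exist). -/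
/-!
Since `Q = (sI - R)⁻¹ (W - R)`, we have `(sI - R)(I - Q) = sI - W`, hence
`(I - Q)⁻¹ P = ((sI - R)(I - Q))⁻¹ V = (sI - W)⁻¹ V`. On the other hand `sI - W` is the
Schur complement of `sI - A₂₂` in `sI - A`, so the block-inverse formula for the first block
row of `(sI - A)⁻¹` gives `C (sI - A)⁻¹ B = (sI - W)⁻¹ V` as well.
-/

open Matrix

namespace Matrix

variable {l m n α : Type*} [DecidableEq m] [DecidableEq n] [CommRing α]

theorem smul_one_sub_fromBlocks (s : α) (A : Matrix m m α) (B : Matrix m n α)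
    (C : Matrix n m α) (D : Matrix n n α) :
    s • 1 - fromBlocks A B C D = fromBlocks (s • 1 - A) (-B) (-C) (s • 1 - D) := by
  rw [← fromBlocks_one, fromBlocks_smul, sub_eq_add_neg, fromBlocks_neg, fromBlocks_add]
  simp only [smul_zero, zero_sub, ← sub_eq_add_neg]

variable [Fintype m] [Fintype n]

theorem fromCols_one_zero_mul_inv_fromBlocks_mul_fromRows (A : Matrix m m α)
    (B : Matrix m n α) (C : Matrix n m α) (D : Matrix n n α) (E : Matrix m l α)
    (F : Matrix n l α) (hD : IsUnit D) :
    fromCols (1 : Matrix m m α) (0 : Matrix m n α) * (fromBlocks A B C D)⁻¹ * fromRows E F =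
      (A - B * D⁻¹ * C)⁻¹ * (E - B * D⁻¹ * F) := by
  have := hD.invertible
  by_cases hS : IsUnit (A - B * D⁻¹ * C)
  · have : Invertible (A - B * ⅟D * C) := by rw [invOf_eq_nonsing_inv]; exact hS.invertible
    have := fromBlocks₂₂Invertible A B C D
    rw [← invOf_eq_nonsing_inv, invOf_fromBlocks₂₂_eq, fromCols_mul_fromBlocks,
      fromCols_mul_fromRows]
    simp only [Matrix.one_mul, Matrix.zero_mul, add_zero, neg_zero, invOf_eq_nonsing_inv,
      Matrix.neg_mul, Matrix.mul_add, Matrix.mul_neg, Matrix.mul_assoc, sub_eq_add_neg]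
  -- With a singular Schur complement the block matrix is singular too, and both sides are `0`.
  · have hM : ¬IsUnit (fromBlocks A B C D).det := by
      rw [det_fromBlocks₂₂, IsUnit.mul_iff, invOf_eq_nonsing_inv, ← isUnit_iff_isUnit_det,
        ← isUnit_iff_isUnit_det]
      exact fun h => hS h.2
    rw [nonsing_inv_apply_not_isUnit _ hM, nonsing_inv_apply_not_isUnit _
      (by rwa [← isUnit_iff_isUnit_det]), Matrix.mul_zero, Matrix.zero_mul, Matrix.zero_mul]

theorem inv_one_sub_inv_mul_mul_inv_mul (N X : Matrix m m α) (Y : Matrix m l α)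
    (hN : IsUnit N) : (1 - N⁻¹ * X)⁻¹ * (N⁻¹ * Y) = (N - X)⁻¹ * Y := by
  rw [← Matrix.mul_assoc, ← Matrix.mul_inv_rev, Matrix.mul_sub, Matrix.mul_one,
    ← Matrix.mul_assoc, mul_nonsing_inv _ ((isUnit_iff_isUnit_det N).mp hN), Matrix.one_mul]

end Matrix

theorem stmt15_general (p q m : ℕ)
    (A11 : Matrix (Fin p) (Fin p) ℝ) (A12 : Matrix (Fin p) (Fin q) ℝ)
    (A21 : Matrix (Fin q) (Fin p) ℝ) (A22 : Matrix (Fin q) (Fin q) ℝ)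
    (B1 : Matrix (Fin p) (Fin m) ℝ) (B2 : Matrix (Fin q) (Fin m) ℝ)
    (W R Q : ℝ → Matrix (Fin p) (Fin p) ℝ) (V P : ℝ → Matrix (Fin p) (Fin m) ℝ)
    (hW : ∀ s : ℝ, W s = A11 + A12 * (s • (1 : Matrix (Fin q) (Fin q) ℝ) - A22)⁻¹ * A21)
    (hV : ∀ s : ℝ, V s = B1 + A12 * (s • (1 : Matrix (Fin q) (Fin q) ℝ) - A22)⁻¹ * B2)
    (hQ : ∀ s : ℝ, Q s = (s • (1 : Matrix (Fin p) (Fin p) ℝ) - R s)⁻¹ * (W s - R s))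
    (hP : ∀ s : ℝ, P s = (s • (1 : Matrix (Fin p) (Fin p) ℝ) - R s)⁻¹ * V s) :
    ∀ s : ℝ,
      IsUnit (s • (1 : Matrix (Fin q) (Fin q) ℝ) - A22) →
      IsUnit (s • (1 : Matrix (Fin p) (Fin p) ℝ) - R s) →
      IsUnit ((1 : Matrix (Fin p) (Fin p) ℝ) - Q s) →
      IsUnit (s • (1 : Matrix (Fin p ⊕ Fin q) (Fin p ⊕ Fin q) ℝ) -
        Matrix.fromBlocks A11 A12 A21 A22) →
      ((1 : Matrix (Fin p) (Fin p) ℝ) - Q s)⁻¹ * P s =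
        Matrix.fromCols (1 : Matrix (Fin p) (Fin p) ℝ) (0 : Matrix (Fin p) (Fin q) ℝ) *
          (s • (1 : Matrix (Fin p ⊕ Fin q) (Fin p ⊕ Fin q) ℝ) -
            Matrix.fromBlocks A11 A12 A21 A22)⁻¹ *
          Matrix.fromRows B1 B2 := by
  intro s hD hRs _ _
  rw [hP s, hQ s, inv_one_sub_inv_mul_mul_inv_mul _ _ _ hRs, sub_sub_sub_cancel_right,
    smul_one_sub_fromBlocks, fromCols_one_zero_mul_inv_fromBlocks_mul_fromRows _ _ _ _ _ _ hD,
    hW s, hV s]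
  simp only [Matrix.neg_mul, Matrix.mul_neg, neg_neg, sub_neg_eq_add, sub_sub]

/-- the transfer function is recovered from the dynamical structure functions:
(I − Q(s))⁻¹ P(s) = C(sI − A)⁻¹B, for every s where the relevant inverses exist. -/
theorem stmt15 (p q m : ℕ)
    (A11 : Matrix (Fin p) (Fin p) ℝ) (A12 : Matrix (Fin p) (Fin q) ℝ)
    (A21 : Matrix (Fin q) (Fin p) ℝ) (A22 : Matrix (Fin q) (Fin q) ℝ)
    (B1 : Matrix (Fin p) (Fin m) ℝ) (B2 : Matrix (Fin q) (Fin m) ℝ)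
    (W R Q : ℝ → Matrix (Fin p) (Fin p) ℝ) (V P : ℝ → Matrix (Fin p) (Fin m) ℝ)
    (hW : ∀ s : ℝ, W s = A11 + A12 * (s • (1 : Matrix (Fin q) (Fin q) ℝ) - A22)⁻¹ * A21)
    (hV : ∀ s : ℝ, V s = B1 + A12 * (s • (1 : Matrix (Fin q) (Fin q) ℝ) - A22)⁻¹ * B2)
    (hR : ∀ s : ℝ, R s = Matrix.diagonal (fun i => W s i i))
    (hQ : ∀ s : ℝ, Q s = (s • (1 : Matrix (Fin p) (Fin p) ℝ) - R s)⁻¹ * (W s - R s))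
    (hP : ∀ s : ℝ, P s = (s • (1 : Matrix (Fin p) (Fin p) ℝ) - R s)⁻¹ * V s) :
    ∀ s : ℝ,
      IsUnit (s • (1 : Matrix (Fin q) (Fin q) ℝ) - A22) →
      IsUnit (s • (1 : Matrix (Fin p) (Fin p) ℝ) - R s) →
      IsUnit ((1 : Matrix (Fin p) (Fin p) ℝ) - Q s) →
      IsUnit (s • (1 : Matrix (Fin p ⊕ Fin q) (Fin p ⊕ Fin q) ℝ) -
        Matrix.fromBlocks A11 A12 A21 A22) →
      ((1 : Matrix (Fin p) (Fin p) ℝ) - Q s)⁻¹ * P s =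
        Matrix.fromCols (1 : Matrix (Fin p) (Fin p) ℝ) (0 : Matrix (Fin p) (Fin q) ℝ) *
          (s • (1 : Matrix (Fin p ⊕ Fin q) (Fin p ⊕ Fin q) ℝ) -
            Matrix.fromBlocks A11 A12 A21 A22)⁻¹ *
          Matrix.fromRows B1 B2 :=
  stmt15_general p q m A11 A12 A21 A22 B1 B2 W R Q V P hW hV hQ hP
end
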